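/- Let M be a finite matroid on ground set E with rank function r_M, let Z ⊆ E, and let b be an element not in E. Define R on subsets of E ∪ {b} by R(X) = r_M(X) for X ⊆ E, and, for X ⊆ E, R(X ∪ {b}) = r_M(X) if r_M(Z ∪ X) = r_M(X), and R(X ∪ {b}) = r_M(X) + 1 otherwise. Then R is the rank function of a matroid on E ∪ {b}; that is, there exists a matroid M' on E ∪ {b} whose rank function is R (this is the operation of placing b freely into the closure of Z). -/

import Mathlib

/-- A finite matroid on ground set `E`, given by its rank function, which satisfies
`r ∅ = 0`, the unit-increase property, and submodularity (on subsets of `E`). -/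
structure FinMatroid (α : Type*) [DecidableEq α] where
  E : Finset α
  r : Finset α → ℕ
  r_empty : r ∅ = 0
  r_le_insert : ∀ X ⊆ E, ∀ e ∈ E, r X ≤ r (insert e X)
  r_insert_le : ∀ X ⊆ E, ∀ e ∈ E, r (insert e X) ≤ r X + 1
  r_submod : ∀ X ⊆ E, ∀ Y ⊆ E, r (X ∪ Y) + r (X ∩ Y) ≤ r X + r Y

namespace FinMatroid

variable {α : Type*} [DecidableEq α]

/-- A set is independent if it is a subset of the ground set whose rank equals its
cardinality. -/
def Indep (M : FinMatroid α) (X : Finset α) : Prop :=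
  X ⊆ M.E ∧ M.r X = X.card

/-- A set is dependent if it is a subset of the ground set that is not independent. -/
def Dep (M : FinMatroid α) (X : Finset α) : Prop :=
  X ⊆ M.E ∧ M.r X ≠ X.card

/-- A circuit is a minimal dependent set: a dependent set all of whose proper subsets
are independent. -/
def Circuit (M : FinMatroid α) (C : Finset α) : Prop :=
  M.Dep C ∧ ∀ C' ⊂ C, M.Indep C'

/-- The connectivity function `λ_M(X) = r(X) + r(E \ X) - r(E)`. -/
def lambda (M : FinMatroid α) (X : Finset α) : ℤ :=
  (M.r X : ℤ) + (M.r (M.E \ X) : ℤ) - (M.r M.E : ℤ)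

/-- `μ_M(X, A) = r(X ∪ A) + r((E \ X) ∪ A) - r(E)`. -/
def mu (M : FinMatroid α) (X A : Finset α) : ℤ :=
  (M.r (X ∪ A) : ℤ) + (M.r ((M.E \ X) ∪ A) : ℤ) - (M.r M.E : ℤ)

/-- The closure `cl_M(X) = {e ∈ E : r(X ∪ {e}) = r(X)}`. -/
def cl (M : FinMatroid α) (X : Finset α) : Finset α :=
  M.E.filter fun e => M.r (insert e X) = M.r X

/-- The width of the path-decomposition (ordering) given by the list `L`:
the maximum of `λ_M({e₁, …, e_i})` over the nonempty prefixes of `L`. -/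
def pdWidth (M : FinMatroid α) (L : List α) : ℤ :=
  ((List.range L.length).map fun i => M.lambda (L.take (i + 1)).toFinset).foldr max 0

/-- The path-width of a matroid: the minimum width over all orderings of the ground
set. -/
noncomputable def pathwidth (M : FinMatroid α) : ℤ :=
  sInf (M.pdWidth '' { L : List α | L.Nodup ∧ L.toFinset = M.E })

end FinMatroid

/-!
Write `g(A)` for the rank that `A ∪ {b}` is to receive, `A ⊆ E`. A function `g` defines a
matroid on `E ∪ {b}` as soon as `r ≤ g ≤ r + 1`, `g` has the unit-increase property, `g` is
submodular, and `g(A ∪ Y) + r(A ∩ Y) ≤ g(A) + r(Y)`: these are exactly the rank axioms for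
pairs of sets of which both, one, or none contains `b`. Here `g(A) = min (r(A) + 1) (r(Z ∪ A))`.
Each of the two terms is submodular, and the cross terms of the minimum are controlled by
`r(A ∪ Z ∪ B) + r(A ∩ B) ≤ r(A) + r(Z ∪ B)`, i.e. submodularity followed by monotonicity.
-/

namespace FinMatroid

variable {α : Type*} [DecidableEq α] (M : FinMatroid α)

lemma r_le_r_union {X A : Finset α} (hX : X ⊆ M.E) (hA : A ⊆ M.E) :
    M.r X ≤ M.r (X ∪ A) := by
  induction A using Finset.induction_on with
  | empty => simp
  | insert a A _ ih =>
    rw [Finset.insert_subset_iff] at hA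
    rw [Finset.union_insert]
    exact (ih hA.2).trans (M.r_le_insert _ (Finset.union_subset hX hA.2) a hA.1)

lemma r_mono {X Y : Finset α} (hXY : X ⊆ Y) (hY : Y ⊆ M.E) : M.r X ≤ M.r Y := by
  simpa [Finset.union_sdiff_of_subset hXY] using
    M.r_le_r_union (hXY.trans hY) (Finset.sdiff_subset.trans hY : Y \ X ⊆ M.E)

lemma r_union_add_r_inter_le_of_subset {X Y Y' : Finset α} (hX : X ⊆ M.E) (hYY' : Y ⊆ Y')
    (hY' : Y' ⊆ M.E) : M.r (X ∪ Y') + M.r (X ∩ Y) ≤ M.r X + M.r Y' :=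
  calc M.r (X ∪ Y') + M.r (X ∩ Y)
      ≤ M.r (X ∪ Y') + M.r (X ∩ Y') := by
        gcongr
        exact M.r_mono (Finset.inter_subset_inter_left hYY') (Finset.inter_subset_left.trans hX)
    _ ≤ M.r X + M.r Y' := M.r_submod X hX Y' hY'

lemma r_union_left_submod {Z A B : Finset α} (hZ : Z ⊆ M.E) (hA : A ⊆ M.E) (hB : B ⊆ M.E) :
    M.r (Z ∪ (A ∪ B)) + M.r (Z ∪ A ∩ B) ≤ M.r (Z ∪ A) + M.r (Z ∪ B) := by
  rw [Finset.union_union_distrib_left, Finset.union_inter_distrib_left]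
  exact M.r_submod _ (Finset.union_subset hZ hA) _ (Finset.union_subset hZ hB)

/-- The data of a single-element extension of `M`: `g A` is the rank of `A` together with the
new element. -/
structure ExtensionRank where
  g : Finset α → ℕ
  r_le_g : ∀ A ⊆ M.E, M.r A ≤ g A
  g_le_r_add_one : ∀ A ⊆ M.E, g A ≤ M.r A + 1
  g_le_insert : ∀ A ⊆ M.E, ∀ e ∈ M.E, g A ≤ g (insert e A)
  g_insert_le : ∀ A ⊆ M.E, ∀ e ∈ M.E, g (insert e A) ≤ g A + 1
  g_submod : ∀ A ⊆ M.E, ∀ B ⊆ M.E, g (A ∪ B) + g (A ∩ B) ≤ g A + g B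
  g_union_add_r_inter_le : ∀ A ⊆ M.E, ∀ Y ⊆ M.E, g (A ∪ Y) + M.r (A ∩ Y) ≤ g A + M.r Y

lemma subset_insert_cases {X E : Finset α} {b : α} (hX : X ⊆ insert b E) :
    (b ∉ X ∧ X ⊆ E) ∨ ∃ A ⊆ E, b ∉ A ∧ X = insert b A := by
  by_cases hbX : b ∈ X
  · exact Or.inr ⟨X.erase b, Finset.subset_insert_iff.mp hX, Finset.notMem_erase b X,
      (Finset.insert_erase hbX).symm⟩
  · exact Or.inl ⟨hbX, (Finset.subset_insert_iff_of_notMem hbX).mp hX⟩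

namespace ExtensionRank

variable {M} (G : M.ExtensionRank) (b : α)

def extRank (X : Finset α) : ℕ :=
  if b ∈ X then G.g (X.erase b) else M.r X

variable {G b}

lemma extRank_of_notMem {X : Finset α} (hbX : b ∉ X) : G.extRank b X = M.r X :=
  if_neg hbX

lemma extRank_insert {A : Finset α} (hbA : b ∉ A) : G.extRank b (insert b A) = G.g A := by
  rw [extRank, if_pos (Finset.mem_insert_self b A), Finset.erase_insert hbA]

lemma extRank_le_insert_and_insert_le (hb : b ∉ M.E) {X : Finset α} (hX : X ⊆ insert b M.E)
    {e : α} (he : e ∈ insert b M.E) :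
    G.extRank b X ≤ G.extRank b (insert e X) ∧
      G.extRank b (insert e X) ≤ G.extRank b X + 1 := by
  rcases subset_insert_cases hX with ⟨hbX, hXE⟩ | ⟨A, hAE, hbA, rfl⟩ <;>
    rcases Finset.mem_insert.mp he with rfl | heE
  · rw [extRank_insert hbX, extRank_of_notMem hbX]
    exact ⟨G.r_le_g X hXE, G.g_le_r_add_one X hXE⟩
  · have hbeX : b ∉ insert e X := by
      simp [hbX, show b ≠ e by rintro rfl; exact hb heE]
    rw [extRank_of_notMem hbX, extRank_of_notMem hbeX]
    exact ⟨M.r_le_insert X hXE e heE, M.r_insert_le X hXE e heE⟩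
  · rw [Finset.insert_idem]
    omega
  · have hbeA : b ∉ insert e A := by
      simp [hbA, show b ≠ e by rintro rfl; exact hb heE]
    rw [Finset.insert_comm, extRank_insert hbA, extRank_insert hbeA]
    exact ⟨G.g_le_insert A hAE e heE, G.g_insert_le A hAE e heE⟩

lemma extRank_submod {X Y : Finset α} (hX : X ⊆ insert b M.E) (hY : Y ⊆ insert b M.E) :
    G.extRank b (X ∪ Y) + G.extRank b (X ∩ Y) ≤ G.extRank b X + G.extRank b Y := by
  rcases subset_insert_cases hX with ⟨hbX, hXE⟩ | ⟨A, hAE, hbA, rfl⟩ <;>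
    rcases subset_insert_cases hY with ⟨hbY, hYE⟩ | ⟨B, hBE, hbB, rfl⟩
  · rw [extRank_of_notMem hbX, extRank_of_notMem hbY,
      extRank_of_notMem (by simp [hbX, hbY]), extRank_of_notMem (by simp [hbX])]
    exact M.r_submod X hXE Y hYE
  · rw [Finset.union_insert, Finset.inter_insert_of_notMem hbX, extRank_of_notMem hbX,
      extRank_insert hbB, extRank_insert (by simp [hbX, hbB]), extRank_of_notMem (by simp [hbX])]
    have := G.g_union_add_r_inter_le B hBE X hXE
    rw [Finset.union_comm, Finset.inter_comm]
    omega
  · rw [Finset.insert_union, Finset.insert_inter_of_notMem hbY, extRank_of_notMem hbY,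
      extRank_insert hbA, extRank_insert (by simp [hbA, hbY]), extRank_of_notMem (by simp [hbY])]
    exact G.g_union_add_r_inter_le A hAE Y hYE
  · rw [← Finset.insert_union_distrib, ← Finset.insert_inter_distrib, extRank_insert hbA,
      extRank_insert hbB, extRank_insert (by simp [hbA, hbB]), extRank_insert (by simp [hbA])]
    exact G.g_submod A hAE B hBE

def extension (hb : b ∉ M.E) : FinMatroid α where
  E := insert b M.E
  r := G.extRank b
  r_empty := by rw [extRank_of_notMem (Finset.notMem_empty b), M.r_empty]
  r_le_insert _ hX _ he := (G.extRank_le_insert_and_insert_le hb hX he).1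
  r_insert_le _ hX _ he := (G.extRank_le_insert_and_insert_le hb hX he).2
  r_submod _ hX _ hY := G.extRank_submod hX hY

end ExtensionRank

def freeClosureRank (Z : Finset α) (hZ : Z ⊆ M.E) : M.ExtensionRank where
  g A := min (M.r A + 1) (M.r (Z ∪ A))
  r_le_g A hA :=
    le_min (Nat.le_succ _) (M.r_mono Finset.subset_union_right (Finset.union_subset hZ hA))
  g_le_r_add_one _ _ := min_le_left _ _
  g_le_insert A hA e he := by
    have := M.r_le_insert A hA e he
    have := M.r_le_insert (Z ∪ A) (Finset.union_subset hZ hA) e he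
    rw [Finset.union_insert]
    omega
  g_insert_le A hA e he := by
    have := M.r_insert_le A hA e he
    have := M.r_insert_le (Z ∪ A) (Finset.union_subset hZ hA) e he
    rw [Finset.union_insert]
    omega
  g_submod A hA B hB := by
    have hr := M.r_submod A hA B hB
    have hs := M.r_union_left_submod hZ hA hB
    have hAB := M.r_union_add_r_inter_le_of_subset hA (Finset.subset_union_right (s₁ := Z))
      (Finset.union_subset hZ hB)
    have hBA := M.r_union_add_r_inter_le_of_subset hB (Finset.subset_union_right (s₁ := Z))
      (Finset.union_subset hZ hA)
    rw [Finset.union_left_comm] at hAB hBA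
    rw [Finset.union_comm B, Finset.inter_comm B] at hBA
    omega
  g_union_add_r_inter_le A hA Y hY := by
    have hr := M.r_submod A hA Y hY
    have hs := M.r_union_add_r_inter_le_of_subset hY (Finset.subset_union_right (s₁ := Z))
      (Finset.union_subset hZ hA)
    rw [Finset.union_left_comm, Finset.union_comm Y, Finset.inter_comm Y] at hs
    omega

end FinMatroid

open FinMatroid in
/-- Placing `b` freely into the closure of `Z`: the function `R` which agrees with `r_M`
on subsets of `E`, and with `R(X ∪ {b}) = r_M(X)` if `r_M(Z ∪ X) = r_M(X)` and
`R(X ∪ {b}) = r_M(X) + 1` otherwise, is the rank function of a matroid on `E ∪ {b}`. -/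
theorem exists_free_closure_extension {α : Type*} [DecidableEq α] (M : FinMatroid α)
    (Z : Finset α) (hZ : Z ⊆ M.E) (b : α) (hb : b ∉ M.E) :
    ∃ M' : FinMatroid α, M'.E = insert b M.E ∧
      (∀ X ⊆ M.E, M'.r X = M.r X) ∧
      (∀ X ⊆ M.E, M'.r (insert b X) =
        if M.r (Z ∪ X) = M.r X then M.r X else M.r X + 1) := by
  let G := M.freeClosureRank Z hZ
  refine ⟨G.extension hb, rfl, fun X hX => ?_, fun X hX => ?_⟩
  · exact ExtensionRank.extRank_of_notMem fun hbX => hb (hX hbX)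
  · have hZX : M.r X ≤ M.r (Z ∪ X) :=
      M.r_mono Finset.subset_union_right (Finset.union_subset hZ hX)
    change G.extRank b (insert b X) = _
    rw [ExtensionRank.extRank_insert fun hbX => hb (hX hbX)]
    change min (M.r X + 1) (M.r (Z ∪ X)) = _
    split_ifs <;> omega
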